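/- arXiv:1608.07993 — 2 statements merged into one kernel-verified Lean document; each statement's English description precedes it below -/
import Mathlib

section
/- Let W be a group and S a subgroup with exactly k ≥ 2 distinct conjugates S₁, …, S_k. Let C = S₁ ∩ ⋯ ∩ S_k (the normal core of S), let T_i = ⋂_{j ≠ i} S_j for each i, and let N = N_W(S₁) ∩ ⋯ ∩ N_W(S_k). Then each T_i is a normal subgroup of N, the product T₁T₂⋯T_k is a subgroup of N, C is a normal subgroup of T₁⋯T_k, and the quotient (T₁⋯T_k)/C is isomorphic to the direct product (T₁/C) × ⋯ × (T_k/C). -/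
/-!
Conjugation by an element of `T i` permutes the conjugates `S j` of `S` and fixes every `S j` with
`j ≠ i`, so it fixes `S i` as well; hence all `T i` lie in `N`, and since `N` normalizes every
`S j`, it normalizes every `T i` and `C`. As the `T i` normalize one another, their join `P`
consists of the ordered products `T 0 ⋯ T (k-1)`. For `i ≠ j` the commutator `⁅T i, T j⁆` lies in every
`S m`: in `S m` for `m ≠ i` because `T i ≤ S m` is normalized by `T j`, and in `S i` because
`T j ≤ S i`. So the images of the `T i` commute in `P / C`, and they are independent because
`T j ≤ S i` for `j ≠ i` while `T i ⊓ S i = C`. The quotient `P / C` is therefore the internal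
direct product of the `T i / C`.
-/

def subgroupConjugates {W : Type*} [Group W] (S : Subgroup W) : Set (Subgroup W) :=
  Set.range fun w : W => Subgroup.map (MulAut.conj w).toMonoidHom S

open Pointwise
open scoped commutatorElement

theorem iSup_fin_succ {α : Type*} [CompleteLattice α] {n : ℕ} (f : Fin (n + 1) → α) :
    ⨆ i, f i = f 0 ⊔ ⨆ i : Fin n, f i.succ :=
  le_antisymm
    (iSup_le <| Fin.cases le_sup_left fun i => le_sup_of_le_right (le_iSup (fun i => f i.succ) i))
    (sup_le (le_iSup f 0) (iSup_le fun i => le_iSup f i.succ))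

theorem MulAction.smul_eq_self_of_forall_ne_smul_eq_self {G α ι : Type*} [Group G]
    [MulAction G α] {S : ι → α} (hS : Function.Injective S) {g : G}
    (hg : ∀ i, g • S i ∈ Set.range S) {i : ι} (hfix : ∀ j ≠ i, g • S j = S j) :
    g • S i = S i := by
  obtain ⟨m, hm⟩ := hg i
  by_cases hmi : m = i
  · rw [← hm, hmi]
  · exact absurd (hS (smul_left_cancel g ((hfix m hmi).trans hm))) hmi

namespace QuotientGroup

variable {G : Type*} [Group G]

theorem commute_mk_iff {N : Subgroup G} [N.Normal] (a b : G) :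
    Commute (a : G ⧸ N) b ↔ ⁅a, b⁆ ∈ N := by
  rw [← commutatorElement_eq_one_iff_commute, ← eq_one_iff, ← mk'_apply, ← mk'_apply,
    ← mk'_apply, map_commutatorElement]

theorem quotientMapSubgroupOfOfLe_injective {C A B : Subgroup G} [(C.subgroupOf A).Normal]
    [(C.subgroupOf B).Normal] (h : A ≤ B) :
    Function.Injective (quotientMapSubgroupOfOfLe (le_refl C) h) := by
  refine (injective_iff_map_eq_one _).2 fun x hx => ?_
  induction x using QuotientGroup.induction_on with
  | H a => exact (eq_one_iff a).2 ((eq_one_iff (Subgroup.inclusion h a)).1 hx)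

section QuotientISup

variable {ι : Type*} (C : Subgroup G) (K : ι → Subgroup G)
  [(C.subgroupOf (⨆ i, K i)).Normal] [∀ i, (C.subgroupOf (K i)).Normal]

abbrev quotientMapISup (i : ι) :
    K i ⧸ C.subgroupOf (K i) →* (⨆ j, K j : Subgroup G) ⧸ C.subgroupOf (⨆ j, K j) :=
  quotientMapSubgroupOfOfLe (le_refl C) (le_iSup K i)

variable {C K}

theorem commute_quotientMapISup (hcomm : Pairwise fun i j => ⁅K i, K j⁆ ≤ C) :
    Pairwise fun i j => ∀ x y, Commute (quotientMapISup C K i x) (quotientMapISup C K j y) := by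
  intro i j hij x y
  induction x using QuotientGroup.induction_on with | H a =>
  induction y using QuotientGroup.induction_on with | H b =>
  exact (commute_mk_iff _ _).2 (Subgroup.commutator_le.1 (hcomm hij) a a.2 b b.2)

theorem range_quotientMapISup_le (i : ι) {H : Subgroup G} (hKH : K i ≤ H) :
    (quotientMapISup C K i).range ≤ (H.subgroupOf (⨆ j, K j)).map (mk' _) := by
  rintro _ ⟨x, rfl⟩
  induction x using QuotientGroup.induction_on with | H a =>
  exact ⟨Subgroup.inclusion (le_iSup K i) a, hKH a.2, rfl⟩

theorem iSupIndep_range_quotientMapISup (hCK : ∀ i, C ≤ K i)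
    (hind : ∀ i, K i ⊓ ⨆ j, ⨆ (_ : j ≠ i), K j ≤ C) :
    iSupIndep fun i => (quotientMapISup C K i).range := by
  refine iSupIndep_def.2 fun i => Disjoint.mono (range_quotientMapISup_le i le_rfl)
    (iSup₂_le fun j hj => range_quotientMapISup_le j
      (le_iSup₂ (f := fun j (_ : j ≠ i) => K j) j hj)) ?_
  refine Subgroup.disjoint_def.2 ?_
  rintro _ ⟨a, ha, rfl⟩ ⟨b, hb, hab⟩
  have hba : a⁻¹ * b ∈ C.subgroupOf (⨆ j, K j) := QuotientGroup.eq.1 hab.symm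
  simp only [SetLike.mem_coe, Subgroup.mem_subgroupOf] at ha hb hba
  -- `b` differs from `a ∈ K i` by an element of `C ≤ K i`
  have hbC : (b : G) ∈ C := hind i ⟨by simpa using mul_mem ha (hCK i hba), hb⟩
  exact (eq_one_iff a).2 (by simpa using mul_mem hbC (inv_mem hba) : (a : G) ∈ C)

theorem iSup_range_quotientMapISup : ⨆ i, (quotientMapISup C K i).range = ⊤ := by
  rw [eq_top_iff]
  rintro q -
  induction q using QuotientGroup.induction_on with | H p =>
  obtain ⟨p, hp⟩ := p
  induction hp using Subgroup.iSup_induction' with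
  | hp i x hx => exact Subgroup.mem_iSup_of_mem i ⟨(⟨x, hx⟩ : K i), rfl⟩
  | h1 => exact one_mem _
  | hmul x y _ _ hx hy => exact mul_mem hx hy

theorem nonempty_quotient_iSup_mulEquiv_pi [Fintype ι] (hCK : ∀ i, C ≤ K i)
    (hcomm : Pairwise fun i j => ⁅K i, K j⁆ ≤ C)
    (hind : ∀ i, K i ⊓ ⨆ j, ⨆ (_ : j ≠ i), K j ≤ C) :
    Nonempty (((⨆ i, K i : Subgroup G) ⧸ C.subgroupOf (⨆ i, K i)) ≃*
      ((i : ι) → K i ⧸ C.subgroupOf (K i))) := by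
  let ψ := MonoidHom.noncommPiCoprod (quotientMapISup C K) (commute_quotientMapISup hcomm)
  have hinj : Function.Injective ψ :=
    MonoidHom.injective_noncommPiCoprod_of_iSupIndep _
      (iSupIndep_range_quotientMapISup hCK hind) fun i => quotientMapSubgroupOfOfLe_injective _
  have hsurj : Function.Surjective ψ := by
    rw [← MonoidHom.range_eq_top, MonoidHom.noncommPiCoprod_range, iSup_range_quotientMapISup]
  exact ⟨(MulEquiv.ofBijective ψ ⟨hinj, hsurj⟩).symm⟩

end QuotientISup

end QuotientGroup

namespace Subgroup

variable {G : Type*} [Group G]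

theorem mem_iSup_iff_exists_ofFn_prod {n : ℕ} {K : Fin n → Subgroup G}
    (hK : ∀ i j, K i ≤ normalizer (K j : Set G)) {g : G} :
    g ∈ ⨆ i, K i ↔ ∃ t : Fin n → G, (∀ i, t i ∈ K i) ∧ g = (List.ofFn t).prod := by
  induction n generalizing g with
  | zero => simp [iSup_of_empty]
  | succ n ih =>
    have hle : ⨆ i : Fin n, K i.succ ≤ normalizer (K 0 : Set G) := iSup_le fun i => hK _ _
    rw [iSup_fin_succ, ← SetLike.mem_coe, coe_mul_of_right_le_normalizer_left _ _ hle,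
      Set.mem_mul, Fin.exists_fin_succ_pi]
    simp only [SetLike.mem_coe, ih fun i j => hK _ _, Fin.forall_fin_succ, Fin.cons_zero,
      Fin.cons_succ, List.ofFn_succ, List.prod_cons]
    grind

variable {ι : Type*} (S : ι → Subgroup G)

/-- The subgroup `T i` of the statement. -/
def iInfCompl (i : ι) : Subgroup G := ⨅ j ∈ ({i}ᶜ : Set ι), S j

variable {S}

theorem iInfCompl_le_of_ne {i j : ι} (h : j ≠ i) : iInfCompl S i ≤ S j := iInf₂_le j h

theorem iInf_le_iInfCompl (i : ι) : ⨅ j, S j ≤ iInfCompl S i := le_iInf₂ fun j _ => iInf_le S j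

theorem iInfCompl_inf_self (i : ι) : iInfCompl S i ⊓ S i = ⨅ j, S j := by
  rw [iInf_split_single S i, inf_comm]
  rfl

theorem iInf_normalizer_le_normalizer_iInfCompl (i : ι) :
    ⨅ j, normalizer (S j : Set G) ≤ normalizer (iInfCompl S i : Set G) :=
  (le_iInf₂ fun j _ => iInf_le _ j).trans <|
    (iInf_mono fun _ => iInf_normalizer_le_normalizer_iInf _).trans
      (iInf_normalizer_le_normalizer_iInf _)

theorem iInfCompl_le_iInf_normalizer (hS : Function.Injective S) {H : Subgroup G}
    (horbit : Set.range S = MulAction.orbit (ConjAct G) H) (i : ι) :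
    iInfCompl S i ≤ ⨅ j, normalizer (S j : Set G) := by
  intro w hw
  have hperm : ∀ j, ConjAct.toConjAct w • S j ∈ Set.range S := fun j =>
    horbit ▸ MulAction.mem_orbit_of_mem_orbit _ (horbit ▸ Set.mem_range_self j)
  have hfix : ∀ j ≠ i, ConjAct.toConjAct w • S j = S j := fun j hj =>
    conjAct_pointwise_smul_eq_self (le_normalizer (iInfCompl_le_of_ne hj hw))
  refine mem_iInf.2 fun j => ?_
  by_cases hj : j = i
  · subst hj
    exact conjAct_pointwise_smul_iff.1
      (MulAction.smul_eq_self_of_forall_ne_smul_eq_self hS hperm hfix)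
  · exact le_normalizer (iInfCompl_le_of_ne hj hw)

theorem commutator_iInfCompl_le_iInf
    (hN : ∀ i, iInfCompl S i ≤ ⨅ j, normalizer (S j : Set G)) {i j : ι} (hij : i ≠ j) :
    ⁅iInfCompl S i, iInfCompl S j⁆ ≤ ⨅ m, S m := by
  refine le_iInf fun m => ?_
  by_cases hmi : m = i
  · subst hmi
    exact (commutator_mono le_rfl (iInfCompl_le_of_ne hij)).trans
      (le_normalizer_iff_commutator_le_right.1 ((hN m).trans (iInf_le _ m)))
  · exact (commutator_mono (iInfCompl_le_of_ne hmi) le_rfl).trans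
      (le_normalizer_iff_commutator_le_left.1 ((hN j).trans (iInf_le _ m)))

theorem iInfCompl_inf_iSup_le (i : ι) :
    iInfCompl S i ⊓ ⨆ j, ⨆ (_ : j ≠ i), iInfCompl S j ≤ ⨅ m, S m := by
  rw [← iInfCompl_inf_self i]
  exact inf_le_inf_left _ (iSup₂_le fun j hj => iInfCompl_le_of_ne hj.symm)

end Subgroup

theorem subgroupConjugates_eq_orbit {W : Type*} [Group W] (H : Subgroup W) :
    subgroupConjugates H = MulAction.orbit (ConjAct W) H :=
  ConjAct.toConjAct.surjective.range_comp fun g : ConjAct W => g • H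

/-- Let `S 0, …, S (k-1)` (for `k ≥ 2`) be the distinct conjugates of the subgroup `S 0` of
`W`.  Let `C = ⋂ i, S i` (the normal core), `T i = ⋂_{j ≠ i} S j`, and let `N` be the
intersection of the normalizers of the `S i`.  Then each `T i` is a normal subgroup of `N`,
the product `T 0 ⋯ T (k-1)` is a subgroup `P` of `N`, `C` is a normal subgroup of `P`, and
`P / C` is isomorphic to the direct product of the quotients `T i / C`. -/
theorem internal_direct_product_of_core_complements {W : Type*} [Group W]
    (k : ℕ) (hk : 2 ≤ k)
    (S : Fin k → Subgroup W) (hinj : Function.Injective S)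
    (hconj : Set.range S = subgroupConjugates (S ⟨0, by omega⟩))
    (C : Subgroup W) (hC : C = ⨅ i, S i)
    (T : Fin k → Subgroup W) (hT : ∀ i, T i = ⨅ j ∈ ({i}ᶜ : Set (Fin k)), S j)
    (N : Subgroup W) (hN : N = ⨅ i, Subgroup.normalizer (S i : Set W)) :
    (∀ i, T i ≤ N) ∧
      (∀ i, ((T i).subgroupOf N).Normal) ∧
      (∃ P : Subgroup W,
        ((P : Set W) =
          {w : W | ∃ t : Fin k → W, (∀ i, t i ∈ T i) ∧ w = (List.ofFn t).prod}) ∧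
        P ≤ N ∧
        (C ≤ P ∧ (C.subgroupOf P).Normal) ∧
        (∀ i, C ≤ T i ∧ (C.subgroupOf (T i)).Normal) ∧
        ([_h1 : (C.subgroupOf P).Normal] → [_h2 : ∀ i, (C.subgroupOf (T i)).Normal] →
          Nonempty ((P ⧸ C.subgroupOf P) ≃* ((i : Fin k) → T i ⧸ C.subgroupOf (T i))))) := by
  obtain rfl := hC
  obtain rfl : T = Subgroup.iInfCompl S := funext hT
  obtain rfl := hN
  have hTN := Subgroup.iInfCompl_le_iInf_normalizer hinj
    (hconj.trans (subgroupConjugates_eq_orbit _))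
  have hNT := Subgroup.iInf_normalizer_le_normalizer_iInfCompl (S := S)
  have hNC := Subgroup.iInf_normalizer_le_normalizer_iInf S
  have hCT := Subgroup.iInf_le_iInfCompl (S := S)
  have hPN := iSup_le hTN
  have hCP := (hCT ⟨0, by omega⟩).trans (le_iSup _ _)
  refine ⟨hTN, fun i => (Subgroup.normal_subgroupOf_iff_le_normalizer (hTN i)).2 (hNT i),
    ⨆ i, Subgroup.iInfCompl S i,
    Set.ext fun _ => Subgroup.mem_iSup_iff_exists_ofFn_prod fun i j => (hTN i).trans (hNT j),
    hPN, ⟨hCP, (Subgroup.normal_subgroupOf_iff_le_normalizer hCP).2 (hPN.trans hNC)⟩,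
    fun i => ⟨hCT i, (Subgroup.normal_subgroupOf_iff_le_normalizer (hCT i)).2 ((hTN i).trans hNC)⟩,
    QuotientGroup.nonempty_quotient_iSup_mulEquiv_pi hCT
      (fun _ _ => Subgroup.commutator_iInfCompl_le_iInf hTN) Subgroup.iInfCompl_inf_iSup_le⟩
end

section
/- Let R be an abstract polytope of rank n ≥ 2 whose automorphism group has exactly k₃ flag orbits, with k₃ finite. Suppose there is a fixed abstract polytope P of rank n−1 whose automorphism group has exactly k₁ flag orbits (k₁ finite) such that every facet-section of R is isomorphic to P, and a fixed abstract polytope Q of rank n−1 whose automorphism group has exactly k₂ flag orbits (k₂ finite) such that every vertex-figure of R is isomorphic to Q. Then lcm(k₁, k₂) divides k₃. -/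
/-- `IsAbstractPolytope n P rk` says that the partially ordered set `P`, equipped with the
strictly monotone rank function `rk` taking values in `{-1, 0, …, n}`, is an abstract
polytope of rank `n`:  it has a unique minimal face of rank `-1` and a unique maximal face of
rank `n`; every flag (maximal chain) contains exactly one face of each rank; the diamond
condition holds; and it is strongly connected. -/
structure IsAbstractPolytope (n : ℕ) (P : Type*) [PartialOrder P] (rk : P → ℤ) : Prop where
  /-- The rank function is strictly monotone. -/
  strictMono : StrictMono rk
  /-- There is a (necessarily unique) minimal face, of rank `-1`. -/
  exists_bot : ∃ B : P, rk B = -1 ∧ ∀ F : P, B ≤ F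
  /-- There is a (necessarily unique) maximal face, of rank `n`. -/
  exists_top : ∃ T : P, rk T = (n : ℤ) ∧ ∀ F : P, F ≤ T
  /-- Every flag contains exactly one face of each rank `-1 ≤ j ≤ n`
  (hence `n + 2` faces in all). -/
  flag_ranks : ∀ (Φ : Flag P) (j : ℤ), -1 ≤ j → j ≤ (n : ℤ) →
    ∃! F : P, F ∈ Φ ∧ rk F = j
  /-- Diamond condition: if `F < G` with `rk G = rk F + 2`, there are exactly two faces
  strictly between `F` and `G`. -/
  diamond : ∀ F G : P, F < G → rk G = rk F + 2 →
    ∃ H₁ H₂ : P, H₁ ≠ H₂ ∧ {H : P | F < H ∧ H < G} = {H₁, H₂}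
  /-- Strong connectivity: if `F < G` with `rk G - rk F ≥ 3`, any two faces strictly between
  `F` and `G` are joined by a sequence of faces strictly between `F` and `G` in which
  consecutive members are comparable. -/
  connected : ∀ F G H H' : P, F < G → rk F + 3 ≤ rk G →
    F < H → H < G → F < H' → H' < G →
    Relation.ReflTransGen
      (fun A B : P => F < A ∧ A < G ∧ F < B ∧ B < G ∧ (A ≤ B ∨ B ≤ A)) H H'

/-- Two flags are `i`-adjacent if they are distinct but agree in every face whose rank is
not `i` (so they differ exactly in their face of rank `i`). -/
def IAdjacent {P : Type*} [PartialOrder P] (rk : P → ℤ) (i : ℤ) (Φ Ψ : Flag P) : Prop :=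
  Φ ≠ Ψ ∧ ∀ F : P, rk F ≠ i → (F ∈ Φ ↔ F ∈ Ψ)

/-- Two flags are in the same orbit when some automorphism (order isomorphism) of `P` maps
one onto the other. -/
def flagOrbitRel (P : Type*) [PartialOrder P] (Φ Ψ : Flag P) : Prop :=
  ∃ σ : P ≃o P, ∀ F : P, F ∈ Ψ ↔ σ.symm F ∈ Φ

/-!
Suppose every section of `R` between faces of ranks `a < b` is isomorphic to a polytope `T`.
Restricting a flag of `R` to such a section and reading it in `T` through an isomorphism gives a
well-defined map from the flag orbits of `R` to those of `T`: another isomorphism, or an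
automorphic image of the flag, only changes the result by an automorphism of `T`. Passing to the
`i`-adjacent flag descends to involutions of the orbit sets, and the map intertwines the
involution of rank `i + a + 1` of `R` with that of rank `i` of `T`. So the involutions of `T`
carry fibres of the map bijectively onto fibres; as `T` is flag-connected, all fibres have the
same size, and the number of flag orbits of `T` divides that of `R`. Facets (`a = -1`,
`b = n - 1`) and vertex-figures (`a = 0`, `b = n`) give `k₁ ∣ k₃` and `k₂ ∣ k₃`.
-/

open Set Relation Function

def OrderIso.restrictIcc {α β : Type*} [PartialOrder α] [PartialOrder β] (e : α ≃o β)
    (x y : α) : Icc x y ≃o Icc (e x) (e y) where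
  toEquiv := e.toEquiv.subtypeEquiv fun z => by simp
  map_rel_iff' := e.le_iff_le

namespace Flag

variable {α β γ : Type*} [PartialOrder α] [PartialOrder β] [PartialOrder γ]

lemma mem_map_iff (e : α ≃o β) (Φ : Flag α) (x : β) : x ∈ map e Φ ↔ e.symm x ∈ Φ := by
  rw [← mem_coe_iff, coe_map, e.image_eq_preimage_symm]
  rfl

lemma map_trans (e : α ≃o β) (e' : β ≃o γ) (Φ : Flag α) :
    map (e.trans e') Φ = map e' (map e Φ) := by
  ext x
  simp

lemma eq_of_coe_subset {Φ Ψ : Flag α} (h : (Φ : Set α) ⊆ Ψ) : Φ = Ψ :=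
  ext (Φ.max_chain' Ψ.chain_le h)

lemma exists_mem_not_mem_of_ne {Φ Ψ : Flag α} (h : Φ ≠ Ψ) : ∃ x ∈ Φ, x ∉ Ψ := by
  by_contra! hsub
  exact h (eq_of_coe_subset hsub)

lemma mem_of_forall_le {x : α} (hx : ∀ y, x ≤ y) (Φ : Flag α) : x ∈ Φ :=
  mem_iff_forall_le_or_ge.2 fun y _ => Or.inl (hx y)

lemma mem_of_forall_ge {x : α} (hx : ∀ y, y ≤ x) (Φ : Flag α) : x ∈ Φ :=
  mem_iff_forall_le_or_ge.2 fun y _ => Or.inr (hx y)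

lemma exists_mem_mem_of_le {x y : α} (hxy : x ≤ y) : ∃ Φ : Flag α, x ∈ Φ ∧ y ∈ Φ := by
  obtain ⟨M, hM, hsub⟩ := (IsChain.pair (r := (· ≤ ·)) hxy).exists_maxChain
  exact ⟨ofIsMaxChain M hM, hsub (by simp), hsub (by simp)⟩

variable {F G : α}

lemma _root_.IsChain.le_or_ge_of_notMem_Icc {s : Set α} (hs : IsChain (· ≤ ·) s) (hF : F ∈ s)
    (hG : G ∈ s) {x y : α} (hx : x ∈ Icc F G) (hy : y ∈ s) (hyI : y ∉ Icc F G) :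
    x ≤ y ∨ y ≤ x := by
  rcases hs.total hy hF with hyF | hFy
  · exact Or.inr (hyF.trans hx.1)
  · exact Or.inl (hx.2.trans ((hs.total hy hG).resolve_left fun hyG => hyI ⟨hFy, hyG⟩))

lemma left_mem_Icc (L : Flag (Icc F G)) (hFG : F ≤ G) : ⟨F, left_mem_Icc.2 hFG⟩ ∈ L :=
  mem_of_forall_le (fun y => y.2.1) L

lemma right_mem_Icc (L : Flag (Icc F G)) (hFG : F ≤ G) : ⟨G, right_mem_Icc.2 hFG⟩ ∈ L :=
  mem_of_forall_ge (fun y => y.2.2) L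

def restrictIcc (Φ : Flag α) (hF : F ∈ Φ) (hG : G ∈ Φ) : Flag (Icc F G) where
  carrier := {x | (x : α) ∈ Φ}
  Chain' _ hx _ hy hne := Φ.chain_le hx hy (Subtype.coe_injective.ne hne)
  max_chain' s hs hsub := hsub.antisymm fun w hw => mem_iff_forall_le_or_ge.2 fun y hy => by
    by_cases hyI : y ∈ Icc F G
    · exact hs.total hw (hsub (a := ⟨y, hyI⟩) hy)
    · exact Φ.chain_le.le_or_ge_of_notMem_Icc hF hG w.2 hy hyI

@[simp]
lemma mem_restrictIcc {Φ : Flag α} {hF : F ∈ Φ} {hG : G ∈ Φ} {x : Icc F G} :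
    x ∈ restrictIcc Φ hF hG ↔ (x : α) ∈ Φ :=
  Iff.rfl

def replaceIcc (Φ : Flag α) (hF : F ∈ Φ) (hG : G ∈ Φ) (L : Flag (Icc F G)) : Flag α where
  carrier := {x | x ∈ Φ ∧ x ∉ Icc F G} ∪ Subtype.val '' (L : Set (Icc F G))
  Chain' := by
    rintro _ (⟨hx, hxI⟩ | ⟨x, hx, rfl⟩) _ (⟨hy, hyI⟩ | ⟨y, hy, rfl⟩) hne
    · exact Φ.chain_le hx hy hne
    · exact (Φ.chain_le.le_or_ge_of_notMem_Icc hF hG y.2 hx hxI).symm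
    · exact Φ.chain_le.le_or_ge_of_notMem_Icc hF hG x.2 hy hyI
    · exact L.le_or_le hx hy
  max_chain' s hs hsub := hsub.antisymm fun w hw => by
    by_cases hwI : w ∈ Icc F G
    · refine Or.inr ⟨⟨w, hwI⟩, mem_iff_forall_le_or_ge.2 fun y hy => ?_, rfl⟩
      exact hs.total hw (hsub (Or.inr ⟨y, hy, rfl⟩))
    · refine Or.inl ⟨mem_iff_forall_le_or_ge.2 fun y hy => ?_, hwI⟩
      by_cases hyI : y ∈ Icc F G
      · have hFG : F ≤ G := hyI.1.trans hyI.2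
        have hmem : ∀ z (hz : z ∈ Icc F G), ⟨z, hz⟩ ∈ L → z ∈ s :=
          fun z hz hzL => hsub (Or.inr ⟨_, hzL, rfl⟩)
        exact (hs.le_or_ge_of_notMem_Icc (hmem F _ (left_mem_Icc L hFG))
          (hmem G _ (right_mem_Icc L hFG)) hyI hw hwI).symm
      · exact hs.total hw (hsub (Or.inl ⟨hy, hyI⟩))

variable {Φ : Flag α} {hF : F ∈ Φ} {hG : G ∈ Φ} {L : Flag (Icc F G)}

lemma mem_replaceIcc {x : α} :
    x ∈ replaceIcc Φ hF hG L ↔ (x ∈ Φ ∧ x ∉ Icc F G) ∨ ∃ hx : x ∈ Icc F G, ⟨x, hx⟩ ∈ L := by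
  change x ∈ {x | x ∈ Φ ∧ x ∉ Icc F G} ∪ Subtype.val '' (L : Set (Icc F G)) ↔ _
  simp

@[simp]
lemma coe_mem_replaceIcc {x : Icc F G} : (x : α) ∈ replaceIcc Φ hF hG L ↔ x ∈ L := by
  simp [mem_replaceIcc, x.2]

lemma replaceIcc_restrictIcc {Ψ : Flag α} (hF' : F ∈ Ψ) (hG' : G ∈ Ψ)
    (h : ∀ x ∈ Φ, x ∉ Icc F G → x ∈ Ψ) : replaceIcc Φ hF hG (restrictIcc Ψ hF' hG') = Ψ :=
  eq_of_coe_subset fun x hx => by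
    rcases mem_replaceIcc.1 hx with ⟨hxΦ, hxI⟩ | ⟨hxI, hxΨ⟩
    exacts [h x hxΦ hxI, hxΨ]

lemma map_restrictIcc (σ : α ≃o β) (hσF : σ F ∈ map σ Φ) (hσG : σ G ∈ map σ Φ) :
    map (σ.restrictIcc F G) (restrictIcc Φ hF hG) = restrictIcc (map σ Φ) hσF hσG := by
  ext x
  simp only [SetLike.mem_coe, mem_map_iff, mem_restrictIcc]
  rfl

end Flag

abbrev FlagOrbit (P : Type*) [PartialOrder P] := Quot (flagOrbitRel P)

section FlagOrbit

variable {α P : Type*} [PartialOrder α] [PartialOrder P]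

lemma flagOrbitRel_map (σ : P ≃o P) (Φ : Flag P) : flagOrbitRel P Φ (Flag.map σ Φ) :=
  ⟨σ, Flag.mem_map_iff σ Φ⟩

lemma exists_eq_map_of_flagOrbitRel {Φ Ψ : Flag P} (h : flagOrbitRel P Φ Ψ) :
    ∃ σ : P ≃o P, Flag.map σ Φ = Ψ := by
  obtain ⟨σ, hσ⟩ := h
  exact ⟨σ, Flag.ext (Set.ext fun x => (Flag.mem_map_iff σ Φ x).trans (hσ x).symm)⟩

lemma FlagOrbit.mk_map_eq_mk_map (e e' : α ≃o P) (L : Flag α) :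
    (Quot.mk _ (Flag.map e L) : FlagOrbit P) = Quot.mk _ (Flag.map e' L) := by
  refine Quot.sound ⟨e.symm.trans e', fun x => ?_⟩
  simp [Flag.mem_map_iff]

end FlagOrbit

lemma Nat.card_eq_card_mul_card_fiber_of_semiconj {X Y ι : Type*} (g : X → Y)
    (a : ι → X → X) (b : ι → Y → Y) (ha : ∀ i, Involutive (a i)) (hb : ∀ i, Involutive (b i))
    (hab : ∀ i, Semiconj g (a i) (b i))
    (hconn : ∀ y y', ReflTransGen (fun y y' => ∃ i, b i y = y') y y') (y₀ : Y) :
    Nat.card X = Nat.card Y * Nat.card {x // g x = y₀} := by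
  have hfiber : ∀ y, Nonempty ({x // g x = y} ≃ {x // g x = y₀}) := by
    intro y
    induction hconn y y₀ with
    | refl => exact ⟨Equiv.refl _⟩
    | tail _ hstep ih =>
      obtain ⟨i, rfl⟩ := hstep
      exact ih.map fun e => e.trans <| ((ha i).toPerm _).subtypeEquiv fun x => by
        simp [hab i x, (hb i).injective.eq_iff]
  calc Nat.card X = Nat.card (Σ y, {x // g x = y}) := Nat.card_congr (Equiv.sigmaFiberEquiv g).symm
    _ = Nat.card (Y × {x // g x = y₀}) := Nat.card_congr <|
        (Equiv.sigmaCongrRight fun y => (hfiber y).some).trans (Equiv.sigmaEquivProd _ _)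
    _ = _ := Nat.card_prod _ _

lemma IAdjacent.symm {P : Type*} [PartialOrder P] {rk : P → ℤ} {i : ℤ} {Φ Ψ : Flag P}
    (h : IAdjacent rk i Φ Ψ) : IAdjacent rk i Ψ Φ :=
  ⟨h.1.symm, fun F hF => (h.2 F hF).symm⟩

lemma IAdjacent.map {P P' : Type*} [PartialOrder P] [PartialOrder P'] {rk : P → ℤ}
    {rk' : P' → ℤ} (e : P ≃o P') (he : ∀ x, rk' (e x) = rk x) {i : ℤ} {Φ Ψ : Flag P}
    (h : IAdjacent rk i Φ Ψ) : IAdjacent rk' i (Flag.map e Φ) (Flag.map e Ψ) := by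
  refine ⟨(Flag.map e).injective.ne h.1, fun x hx => ?_⟩
  rw [Flag.mem_map_iff, Flag.mem_map_iff]
  exact h.2 _ (by rwa [← he, e.apply_symm_apply])

namespace IsAbstractPolytope

variable {n : ℕ} {P : Type*} [PartialOrder P] {rk : P → ℤ} (h : IsAbstractPolytope n P rk)
include h

lemma neg_one_le_rank (x : P) : -1 ≤ rk x := by
  obtain ⟨B, hB, hBle⟩ := h.exists_bot
  exact hB ▸ h.strictMono.monotone (hBle x)

lemma rank_le (x : P) : rk x ≤ n := by
  obtain ⟨T, hT, hTle⟩ := h.exists_top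
  exact hT ▸ h.strictMono.monotone (hTle x)

lemma le_of_rank_eq_neg_one {x : P} (hx : rk x = -1) (y : P) : x ≤ y := by
  obtain ⟨B, hB, hBle⟩ := h.exists_bot
  obtain rfl : B = x := (hBle x).eq_of_not_lt fun hlt => by have := h.strictMono hlt; omega
  exact hBle y

lemma le_of_rank_eq {x : P} (hx : rk x = n) (y : P) : y ≤ x := by
  obtain ⟨T, hT, hTle⟩ := h.exists_top
  obtain rfl : x = T := (hTle x).eq_of_not_lt fun hlt => by have := h.strictMono hlt; omega
  exact hTle y

lemma Icc_eq_Iic {F : P} (hF : rk F = -1) (G : P) : Set.Icc F G = Set.Iic G := by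
  ext x
  simp [h.le_of_rank_eq_neg_one hF x]

lemma Icc_eq_Ici {G : P} (hG : rk G = n) (F : P) : Set.Icc F G = Set.Ici F := by
  ext x
  simp [h.le_of_rank_eq hG x]

lemma eq_of_le_of_rank_eq {x y : P} (hxy : x ≤ y) (hr : rk x = rk y) : x = y :=
  hxy.eq_of_not_lt fun hlt => (h.strictMono hlt).ne hr

lemma lt_of_mem_of_rank_lt {Φ : Flag P} {x y : P} (hx : x ∈ Φ) (hy : y ∈ Φ)
    (hr : rk x < rk y) : x < y :=
  ((Φ.le_or_le hx hy).resolve_right fun hyx => (h.strictMono.monotone hyx).not_gt hr).lt_of_ne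
    (by rintro rfl; exact hr.false)

lemma eq_of_mem_of_rank_eq {Φ : Flag P} {x y : P} (hx : x ∈ Φ) (hy : y ∈ Φ)
    (hr : rk x = rk y) : x = y :=
  (Φ.le_or_le hx hy).elim (h.eq_of_le_of_rank_eq · hr)
    fun hyx => (h.eq_of_le_of_rank_eq hyx hr.symm).symm

lemma le_of_mem_of_rank_le {Φ : Flag P} {x y : P} (hx : x ∈ Φ) (hy : y ∈ Φ)
    (hr : rk x ≤ rk y) : x ≤ y :=
  hr.lt_or_eq.elim (h.lt_of_mem_of_rank_lt hx hy · |>.le) (h.eq_of_mem_of_rank_eq hx hy · |>.le)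

lemma exists_mem_rank_eq (Φ : Flag P) {j : ℤ} (hj₁ : -1 ≤ j) (hj₂ : j ≤ n) :
    ∃ x ∈ Φ, rk x = j := by
  obtain ⟨x, ⟨hx, hxj⟩, -⟩ := h.flag_ranks Φ j hj₁ hj₂
  exact ⟨x, hx, hxj⟩

lemma isMaxChain_of_forall_exists_rank_eq {c : Set P} (hc : IsChain (· ≤ ·) c)
    (hr : ∀ j : ℤ, -1 ≤ j → j ≤ n → ∃ x ∈ c, rk x = j) : IsMaxChain (· ≤ ·) c := by
  refine ⟨hc, fun t ht hct => hct.antisymm fun w hw => ?_⟩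
  obtain ⟨x, hx, hxr⟩ := hr (rk w) (h.neg_one_le_rank w) (h.rank_le w)
  rcases ht.total (hct hx) hw with hxw | hwx
  · rwa [← h.eq_of_le_of_rank_eq hxw hxr]
  · rwa [h.eq_of_le_of_rank_eq hwx hxr.symm]

lemma ncard_mem_le {Φ : Flag P} {x : P} (hx : x ∈ Φ) :
    ({y | y ∈ Φ ∧ y ≤ x}.ncard : ℤ) = rk x + 2 := by
  have himage : rk '' {y | y ∈ Φ ∧ y ≤ x} = Icc (-1) (rk x) := by
    ext j
    constructor
    · rintro ⟨y, ⟨-, hyx⟩, rfl⟩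
      exact ⟨h.neg_one_le_rank y, h.strictMono.monotone hyx⟩
    · rintro ⟨hj₁, hj₂⟩
      obtain ⟨y, hy, rfl⟩ := h.exists_mem_rank_eq Φ hj₁ (hj₂.trans (h.rank_le x))
      exact ⟨y, ⟨hy, h.le_of_mem_of_rank_le hy hx hj₂⟩, rfl⟩
  have hinj : InjOn rk {y | y ∈ Φ ∧ y ≤ x} := fun y hy z hz => h.eq_of_mem_of_rank_eq hy.1 hz.1
  rw [← hinj.ncard_image, himage, ← Finset.coe_Icc, ncard_coe_finset, Int.card_Icc,
    Int.toNat_of_nonneg (by linarith [h.neg_one_le_rank x])]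
  ring

lemma rank_orderIso {m : ℕ} {P' : Type*} [PartialOrder P'] {rk' : P' → ℤ}
    (h' : IsAbstractPolytope m P' rk') (e : P ≃o P') (x : P) : rk' (e x) = rk x := by
  obtain ⟨Φ, hx, -⟩ := Flag.exists_mem_mem_of_le (le_refl x)
  have hex : e x ∈ Flag.map e Φ := by simpa [Flag.mem_map_iff] using hx
  have himage : {y | y ∈ Flag.map e Φ ∧ y ≤ e x} = e '' {y | y ∈ Φ ∧ y ≤ x} := by
    rw [e.image_eq_preimage_symm]
    ext y
    simp [Flag.mem_map_iff, e.symm_apply_le]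
  have := h'.ncard_mem_le hex
  rw [himage, ncard_image_of_injective _ e.injective, h.ncard_mem_le hx] at this
  omega

end IsAbstractPolytope

open Classical in
noncomputable def adjacentFlag {P : Type*} [PartialOrder P] (rk : P → ℤ) (i : ℤ) (Φ : Flag P) :
    Flag P :=
  if hΦ : ∃ Ψ, IAdjacent rk i Φ Ψ then hΦ.choose else Φ

lemma adjacentFlag_of_not_exists {P : Type*} [PartialOrder P] {rk : P → ℤ} {i : ℤ}
    {Φ : Flag P} (hΦ : ¬ ∃ Ψ, IAdjacent rk i Φ Ψ) : adjacentFlag rk i Φ = Φ :=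
  dif_neg hΦ

namespace IsAbstractPolytope

variable {n : ℕ} {P : Type*} [PartialOrder P] {rk : P → ℤ} (h : IsAbstractPolytope n P rk)
include h

lemma rank_mem_of_iAdjacent {i : ℤ} {Φ Ψ : Flag P} (hΦΨ : IAdjacent rk i Φ Ψ) :
    0 ≤ i ∧ i < n := by
  obtain ⟨x, hxΦ, hxΨ⟩ := Flag.exists_mem_not_mem_of_ne hΦΨ.1
  have hxi : rk x = i := by_contra fun hxi => hxΨ ((hΦΨ.2 x hxi).1 hxΦ)
  have h₁ : rk x ≠ -1 := fun hx => hxΨ (Flag.mem_of_forall_le (h.le_of_rank_eq_neg_one hx) Ψ)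
  have h₂ : rk x ≠ n := fun hx => hxΨ (Flag.mem_of_forall_ge (h.le_of_rank_eq hx) Ψ)
  have := h.neg_one_le_rank x
  have := h.rank_le x
  omega

lemma exists_ne_of_diamond {F X G : P} (hFX : F < X) (hXG : X < G) (hr : rk G = rk F + 2) :
    ∃ Y, F < Y ∧ Y < G ∧ Y ≠ X := by
  obtain ⟨H₁, H₂, hne, hset⟩ := h.diamond F G (hFX.trans hXG) hr
  have hmem : ∀ H ∈ ({H₁, H₂} : Set P), F < H ∧ H < G := fun H hH => by rwa [← hset] at hH
  by_cases hX : H₁ = X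
  · exact ⟨H₂, (hmem H₂ (by simp)).1, (hmem H₂ (by simp)).2, hX ▸ hne.symm⟩
  · exact ⟨H₁, (hmem H₁ (by simp)).1, (hmem H₁ (by simp)).2, hX⟩

lemma eq_of_diamond {F X Y Z G : P} (hr : rk G = rk F + 2) (hFX : F < X) (hXG : X < G)
    (hFY : F < Y) (hYG : Y < G) (hFZ : F < Z) (hZG : Z < G) (hYX : Y ≠ X) (hZX : Z ≠ X) :
    Y = Z := by
  obtain ⟨H₁, H₂, -, hset⟩ := h.diamond F G (hFX.trans hXG) hr
  have hmem : ∀ H, F < H → H < G → H = H₁ ∨ H = H₂ := fun H h₁ h₂ =>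
    (show H ∈ ({H₁, H₂} : Set P) from hset ▸ ⟨h₁, h₂⟩)
  rcases hmem X hFX hXG with rfl | rfl <;> rcases hmem Y hFY hYG with rfl | rfl <;>
    rcases hmem Z hFZ hZG with rfl | rfl <;> tauto

lemma eq_of_forall_rank_ne {i : ℤ} {Φ Ψ : Flag P} {Z : P} (hZΦ : Z ∈ Φ) (hZΨ : Z ∈ Ψ)
    (hZ : rk Z = i) (hΦΨ : ∀ x ∈ Φ, rk x ≠ i → x ∈ Ψ) : Φ = Ψ :=
  Flag.eq_of_coe_subset fun x hx => by
    by_cases hxi : rk x = i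
    · rwa [h.eq_of_mem_of_rank_eq hx hZΦ (hxi.trans hZ.symm)]
    · exact hΦΨ x hx hxi

lemma exists_iAdjacent {i : ℤ} (hi : 0 ≤ i ∧ i < n) (Φ : Flag P) :
    ∃ Ψ, IAdjacent rk i Φ Ψ := by
  obtain ⟨F, hFΦ, hF⟩ := h.exists_mem_rank_eq Φ (j := i - 1) (by omega) (by omega)
  obtain ⟨X, hXΦ, hX⟩ := h.exists_mem_rank_eq Φ (j := i) (by omega) (by omega)
  obtain ⟨G, hGΦ, hG⟩ := h.exists_mem_rank_eq Φ (j := i + 1) (by omega) (by omega)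
  obtain ⟨Y, hFY, hYG, hYX⟩ := h.exists_ne_of_diamond (h.lt_of_mem_of_rank_lt hFΦ hXΦ (by omega))
    (h.lt_of_mem_of_rank_lt hXΦ hGΦ (by omega)) (by omega)
  have hY : rk Y = i := by
    have := h.strictMono hFY
    have := h.strictMono hYG
    omega
  have hrank_ne : ∀ x ∈ Φ, x ≠ X → rk x ≠ i := fun x hx hxX hxi =>
    hxX (h.eq_of_mem_of_rank_eq hx hXΦ (hxi.trans hX.symm))
  have hchain : IsChain (· ≤ ·) (insert Y ((Φ : Set P) \ {X})) := by
    refine (Φ.chain_le.mono sdiff_subset).insert fun x ⟨hx, hxX⟩ _ => ?_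
    rcases lt_or_gt_of_ne (hrank_ne x hx hxX) with hxi | hxi
    · exact Or.inr ((h.le_of_mem_of_rank_le hx hFΦ (by omega)).trans hFY.le)
    · exact Or.inl (hYG.le.trans (h.le_of_mem_of_rank_le hGΦ hx (by omega)))
  refine ⟨.ofIsMaxChain _ (h.isMaxChain_of_forall_exists_rank_eq hchain fun j hj₁ hj₂ => ?_),
    fun hΦ => hYX (h.eq_of_mem_of_rank_eq (hΦ ▸ mem_insert Y _) hXΦ (hY.trans hX.symm)),
    fun x hx => ?_⟩
  · by_cases hj : j = i
    · exact ⟨Y, mem_insert Y _, hY.trans hj.symm⟩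
    · obtain ⟨x, hx, rfl⟩ := h.exists_mem_rank_eq Φ hj₁ hj₂
      exact ⟨x, mem_insert_of_mem _ ⟨hx, by rintro rfl; exact hj hX⟩, rfl⟩
  · have hxY : x ≠ Y := by rintro rfl; exact hx hY
    have hxX : x ≠ X := by rintro rfl; exact hx hX
    change x ∈ Φ ↔ x ∈ insert Y ((Φ : Set P) \ {X})
    simp [hxY, hxX]

lemma eq_of_iAdjacent {i : ℤ} {Φ Ψ₁ Ψ₂ : Flag P} (h₁ : IAdjacent rk i Φ Ψ₁)
    (h₂ : IAdjacent rk i Φ Ψ₂) : Ψ₁ = Ψ₂ := by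
  have hi := h.rank_mem_of_iAdjacent h₁
  obtain ⟨F, hFΦ, hF⟩ := h.exists_mem_rank_eq Φ (j := i - 1) (by omega) (by omega)
  obtain ⟨X, hXΦ, hX⟩ := h.exists_mem_rank_eq Φ (j := i) (by omega) (by omega)
  obtain ⟨G, hGΦ, hG⟩ := h.exists_mem_rank_eq Φ (j := i + 1) (by omega) (by omega)
  -- the face of rank `i` of an `i`-adjacent flag is the other face of the diamond `F < · < G`
  have key : ∀ Ψ, IAdjacent rk i Φ Ψ → ∃ Z ∈ Ψ, rk Z = i ∧ F < Z ∧ Z < G ∧ Z ≠ X := by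
    intro Ψ hΦΨ
    obtain ⟨Z, hZΨ, hZ⟩ := h.exists_mem_rank_eq Ψ (j := i) (by omega) (by omega)
    have hFΨ := (hΦΨ.2 F (by omega)).1 hFΦ
    have hGΨ := (hΦΨ.2 G (by omega)).1 hGΦ
    refine ⟨Z, hZΨ, hZ, h.lt_of_mem_of_rank_lt hFΨ hZΨ (by omega),
      h.lt_of_mem_of_rank_lt hZΨ hGΨ (by omega), ?_⟩
    rintro rfl
    exact hΦΨ.1 (h.eq_of_forall_rank_ne hXΦ hZΨ hX fun x hx hxi => (hΦΨ.2 x hxi).1 hx)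
  obtain ⟨Z₁, hZ₁, hZ₁i, hFZ₁, hZ₁G, hZ₁X⟩ := key Ψ₁ h₁
  obtain ⟨Z₂, hZ₂, -, hFZ₂, hZ₂G, hZ₂X⟩ := key Ψ₂ h₂
  obtain rfl := h.eq_of_diamond (by omega) (h.lt_of_mem_of_rank_lt hFΦ hXΦ (by omega))
    (h.lt_of_mem_of_rank_lt hXΦ hGΦ (by omega)) hFZ₁ hZ₁G hFZ₂ hZ₂G hZ₁X hZ₂X
  exact h.eq_of_forall_rank_ne hZ₁ hZ₂ hZ₁i fun x hx hxi => (h₂.2 x hxi).1 ((h₁.2 x hxi).2 hx)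

lemma iAdjacent_adjacentFlag {i : ℤ} (hi : 0 ≤ i ∧ i < n) (Φ : Flag P) :
    IAdjacent rk i Φ (adjacentFlag rk i Φ) := by
  have hΦ := h.exists_iAdjacent hi Φ
  rw [adjacentFlag, dif_pos hΦ]
  exact hΦ.choose_spec

lemma adjacentFlag_eq {i : ℤ} {Φ Ψ : Flag P} (hΦΨ : IAdjacent rk i Φ Ψ) :
    adjacentFlag rk i Φ = Ψ :=
  h.eq_of_iAdjacent (h.iAdjacent_adjacentFlag (h.rank_mem_of_iAdjacent hΦΨ) Φ) hΦΨ

lemma adjacentFlag_involutive (i : ℤ) : Involutive (adjacentFlag rk i) := by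
  intro Φ
  by_cases hΦ : ∃ Ψ, IAdjacent rk i Φ Ψ
  · obtain ⟨Ψ, hΦΨ⟩ := hΦ
    rw [h.adjacentFlag_eq hΦΨ, h.adjacentFlag_eq hΦΨ.symm]
  · rw [adjacentFlag_of_not_exists hΦ, adjacentFlag_of_not_exists hΦ]

lemma adjacentFlag_map (σ : P ≃o P) (i : ℤ) (Φ : Flag P) :
    adjacentFlag rk i (Flag.map σ Φ) = Flag.map σ (adjacentFlag rk i Φ) := by
  have hσ := h.rank_orderIso h σ
  by_cases hΦ : ∃ Ψ, IAdjacent rk i Φ Ψ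
  · obtain ⟨Ψ, hΦΨ⟩ := hΦ
    rw [h.adjacentFlag_eq hΦΨ, h.adjacentFlag_eq (hΦΨ.map σ hσ)]
  · have hσΦ : ¬ ∃ Ψ, IAdjacent rk i (Flag.map σ Φ) Ψ := by
      rintro ⟨Ψ, hΨ⟩
      refine hΦ ⟨Flag.map σ.symm Ψ, ?_⟩
      have := hΨ.map σ.symm (h.rank_orderIso h σ.symm)
      rwa [← Flag.symm_map, Equiv.symm_apply_apply] at this
    rw [adjacentFlag_of_not_exists hσΦ, adjacentFlag_of_not_exists hΦ]

noncomputable def adjacentOrbit (i : ℤ) : FlagOrbit P → FlagOrbit P :=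
  Quot.map (adjacentFlag rk i) fun Φ Ψ hΦΨ => by
    obtain ⟨σ, rfl⟩ := exists_eq_map_of_flagOrbitRel hΦΨ
    rw [h.adjacentFlag_map]
    exact flagOrbitRel_map σ _

lemma adjacentOrbit_involutive (i : ℤ) : Involutive (h.adjacentOrbit i) := by
  rintro ⟨Φ⟩
  exact congrArg (Quot.mk _) (h.adjacentFlag_involutive i Φ)

variable {F G : P}

lemma Icc_flag_ranks (hFG : F < G) (L : Flag (Set.Icc F G)) {j : ℤ} (hj₁ : -1 ≤ j)
    (hj₂ : j ≤ rk G - rk F - 1) : ∃! x, x ∈ L ∧ rk x - rk F - 1 = j := by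
  obtain ⟨Φ, hFΦ, hGΦ⟩ := Flag.exists_mem_mem_of_le hFG.le
  have hF := (Flag.coe_mem_replaceIcc (hF := hFΦ) (hG := hGΦ)).2 (Flag.left_mem_Icc L hFG.le)
  have hG := (Flag.coe_mem_replaceIcc (hF := hFΦ) (hG := hGΦ)).2 (Flag.right_mem_Icc L hFG.le)
  obtain ⟨x, ⟨hx, hxr⟩, hxu⟩ := h.flag_ranks (Φ.replaceIcc hFΦ hGΦ L) (j + rk F + 1)
    (by have := h.neg_one_le_rank F; omega) (by have := h.rank_le G; omega)
  have hxI : x ∈ Set.Icc F G :=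
    ⟨h.le_of_mem_of_rank_le hF hx (by omega), h.le_of_mem_of_rank_le hx hG (by omega)⟩
  refine ⟨⟨x, hxI⟩, ⟨Flag.coe_mem_replaceIcc.1 hx, show rk x - rk F - 1 = j by omega⟩, ?_⟩
  rintro y ⟨hy, hyr⟩
  exact Subtype.ext (hxu y ⟨Flag.coe_mem_replaceIcc.2 hy, by omega⟩)

lemma Icc_diamond (A B : Set.Icc F G) (hAB : A < B) (hr : rk B = rk A + 2) :
    ∃ H₁ H₂ : Set.Icc F G, H₁ ≠ H₂ ∧ {H | A < H ∧ H < B} = {H₁, H₂} := by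
  obtain ⟨H₁, H₂, hne, hset⟩ := h.diamond A B hAB hr
  have hI : ∀ H ∈ ({H₁, H₂} : Set P), H ∈ Set.Icc F G := fun H hH => by
    rw [← hset] at hH
    exact ⟨A.2.1.trans hH.1.le, hH.2.le.trans B.2.2⟩
  refine ⟨⟨H₁, hI H₁ (by simp)⟩, ⟨H₂, hI H₂ (by simp)⟩, fun h₁₂ => hne (congrArg (·.1) h₁₂), ?_⟩
  ext K
  simpa [Subtype.ext_iff, ← Subtype.coe_lt_coe] using Set.ext_iff.1 hset K

lemma Icc_connected (A B H H' : Set.Icc F G) (hAB : A < B) (hr : rk A + 3 ≤ rk B)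
    (hAH : A < H) (hHB : H < B) (hAH' : A < H') (hH'B : H' < B) :
    ReflTransGen (fun K K' : Set.Icc F G => A < K ∧ K < B ∧ A < K' ∧ K' < B ∧ (K ≤ K' ∨ K' ≤ K))
      H H' := by
  classical
  -- the path in `P` stays strictly between `A` and `B`, so it can be pulled back to the section
  let f : P → Set.Icc F G := fun x => if hx : x ∈ Set.Icc F G then ⟨x, hx⟩ else A
  have hf : ∀ x (hx : x ∈ Set.Icc F G), f x = ⟨x, hx⟩ := fun x hx => dif_pos hx
  obtain ⟨H, hH⟩ := H
  obtain ⟨H', hH'⟩ := H'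
  rw [← hf H hH, ← hf H' hH']
  refine ReflTransGen.lift f ?_ _ _ (h.connected A B H H' hAB hr hAH hHB hAH' hH'B)
  rintro x y ⟨hAx, hxB, hAy, hyB, hxy⟩
  have hx : x ∈ Set.Icc F G := ⟨A.2.1.trans hAx.le, hxB.le.trans B.2.2⟩
  have hy : y ∈ Set.Icc F G := ⟨A.2.1.trans hAy.le, hyB.le.trans B.2.2⟩
  simp only [onFun, hf x hx, hf y hy]
  exact ⟨hAx, hxB, hAy, hyB, hxy⟩

/-- The section `G/F` of a polytope, with ranks shifted so that `F` has rank `-1`. -/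
lemma Icc (hFG : F < G) :
    IsAbstractPolytope (rk G - rk F - 1).toNat (Set.Icc F G) (fun x => rk x - rk F - 1) := by
  have hrank : ((rk G - rk F - 1).toNat : ℤ) = rk G - rk F - 1 :=
    Int.toNat_of_nonneg (by have := h.strictMono hFG; omega)
  refine ⟨fun x y hxy => by have := h.strictMono hxy; omega,
    ⟨⟨F, left_mem_Icc.2 hFG.le⟩, by ring, fun x => x.2.1⟩,
    ⟨⟨G, right_mem_Icc.2 hFG.le⟩, by rw [hrank], fun x => x.2.2⟩,
    fun L j hj₁ hj₂ => h.Icc_flag_ranks hFG L hj₁ (hrank ▸ hj₂),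
    fun A B hAB hr => h.Icc_diamond A B hAB (by omega),
    fun A B H H' hAB hr => h.Icc_connected A B H H' hAB (by omega)⟩

lemma iAdjacent_restrictIcc {i : ℤ} {Φ Ψ : Flag P} (hΦΨ : IAdjacent rk i Φ Ψ)
    (hFΦ : F ∈ Φ) (hGΦ : G ∈ Φ) (hFΨ : F ∈ Ψ) (hGΨ : G ∈ Ψ) (hi : rk F < i ∧ i < rk G) :
    IAdjacent (fun x : Set.Icc F G => rk x - rk F - 1) (i - rk F - 1)
      (Φ.restrictIcc hFΦ hGΦ) (Ψ.restrictIcc hFΨ hGΨ) := by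
  obtain ⟨x, hxΦ, hxΨ⟩ := Flag.exists_mem_not_mem_of_ne hΦΨ.1
  have hxi : rk x = i := by_contra fun hxi => hxΨ ((hΦΨ.2 x hxi).1 hxΦ)
  have hx : x ∈ Set.Icc F G :=
    ⟨h.le_of_mem_of_rank_le hFΦ hxΦ (by omega), h.le_of_mem_of_rank_le hxΦ hGΦ (by omega)⟩
  refine ⟨fun heq => hxΨ ?_, fun y hy => hΦΨ.2 y fun hyi => hy (by simp only [hyi])⟩
  have hxΦ' : (⟨x, hx⟩ : Set.Icc F G) ∈ Φ.restrictIcc hFΦ hGΦ := hxΦ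
  rwa [heq, Flag.mem_restrictIcc] at hxΦ'

end IsAbstractPolytope

lemma IAdjacent.replaceIcc {P : Type*} [PartialOrder P] {rk : P → ℤ} {F G : P} {Φ : Flag P}
    (hF : F ∈ Φ) (hG : G ∈ Φ) {i : ℤ} {L L' : Flag (Icc F G)}
    (hLL' : IAdjacent (fun x : Icc F G => rk x - rk F - 1) i L L') :
    IAdjacent rk (i + rk F + 1) (Φ.replaceIcc hF hG L) (Φ.replaceIcc hF hG L') := by
  refine ⟨fun heq => hLL'.1 (SetLike.ext fun y => ?_), fun x hx => ?_⟩
  · rw [← Flag.coe_mem_replaceIcc (hF := hF) (hG := hG), heq, Flag.coe_mem_replaceIcc]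
  · rw [Flag.mem_replaceIcc, Flag.mem_replaceIcc]
    exact or_congr Iff.rfl (exists_congr fun hxI => hLL'.2 ⟨x, hxI⟩ fun hxi => hx (by
      simp only at hxi; omega))

def FlagConnected {P : Type*} [PartialOrder P] (rk : P → ℤ) : Flag P → Flag P → Prop :=
  ReflTransGen fun Φ Ψ => ∃ i, IAdjacent rk i Φ Ψ

section FlagConnected

variable {P : Type*} [PartialOrder P] {rk : P → ℤ}

lemma FlagConnected.replaceIcc {F G : P} {Φ : Flag P} (hF : F ∈ Φ) (hG : G ∈ Φ)
    {L L' : Flag (Icc F G)} (hLL' : FlagConnected (fun x : Icc F G => rk x - rk F - 1) L L') :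
    FlagConnected rk (Φ.replaceIcc hF hG L) (Φ.replaceIcc hF hG L') :=
  ReflTransGen.lift _ (fun _ _ ⟨_, hi⟩ => ⟨_, hi.replaceIcc hF hG⟩) _ _ hLL'

lemma flagConnected_of_forall_notMem_Icc {F G : P}
    (hsec : ∀ L L' : Flag (Icc F G), FlagConnected (fun x : Icc F G => rk x - rk F - 1) L L')
    {Φ Ψ : Flag P} (hFΦ : F ∈ Φ) (hGΦ : G ∈ Φ) (hFΨ : F ∈ Ψ) (hGΨ : G ∈ Ψ)
    (hΦΨ : ∀ x ∈ Φ, x ∉ Icc F G → x ∈ Ψ) : FlagConnected rk Φ Ψ := by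
  have := (hsec (Φ.restrictIcc hFΦ hGΦ) (Ψ.restrictIcc hFΨ hGΨ)).replaceIcc hFΦ hGΦ
  rwa [Flag.replaceIcc_restrictIcc _ _ fun x hx _ => hx, Flag.replaceIcc_restrictIcc _ _ hΦΨ]
    at this

/-- Change the part below `H` first, then the part above. -/
lemma flagConnected_of_mem {B H T : P} (hB : ∀ x, B ≤ x) (hT : ∀ x, x ≤ T)
    (hlow : ∀ L L' : Flag (Icc B H), FlagConnected (fun x : Icc B H => rk x - rk B - 1) L L')
    (hup : ∀ U U' : Flag (Icc H T), FlagConnected (fun x : Icc H T => rk x - rk H - 1) U U')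
    {Φ Ψ : Flag P} (hΦ : H ∈ Φ) (hΨ : H ∈ Ψ) : FlagConnected rk Φ Ψ := by
  have hBΦ := Flag.mem_of_forall_le hB Φ
  have hBΨ := Flag.mem_of_forall_le hB Ψ
  set Φ' := Φ.replaceIcc hBΦ hΦ (Ψ.restrictIcc hBΨ hΨ)
  have hHΦ' : H ∈ Φ' := Flag.mem_replaceIcc.2 (Or.inr ⟨⟨hB H, le_rfl⟩, hΨ⟩)
  refine (flagConnected_of_forall_notMem_Icc hlow hBΦ hΦ (Flag.mem_of_forall_le hB Φ') hHΦ'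
    fun x hx hxI => Flag.mem_replaceIcc.2 (Or.inl ⟨hx, hxI⟩)).trans
    (flagConnected_of_forall_notMem_Icc hup hHΦ' (Flag.mem_of_forall_ge hT Φ') hΨ
      (Flag.mem_of_forall_ge hT Ψ) fun x hx hxI => ?_)
  rcases Flag.mem_replaceIcc.1 hx with ⟨hxΦ, hxI'⟩ | ⟨_, hxΨ⟩
  · rcases Φ.le_or_le hxΦ hΦ with hxH | hHx
    exacts [absurd ⟨hB x, hxH⟩ hxI', absurd ⟨hHx, hT x⟩ hxI]
  · exact hxΨ

end FlagConnected

universe u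

theorem IsAbstractPolytope.flagConnected {m : ℕ} {α : Type u} [PartialOrder α] {rk : α → ℤ}
    (h : IsAbstractPolytope m α rk) (Φ Ψ : Flag α) : FlagConnected rk Φ Ψ := by
  induction m using Nat.strong_induction_on generalizing α with
  | _ m ih =>
  obtain ⟨B, hB, hBle⟩ := h.exists_bot
  obtain ⟨T, hT, hTle⟩ := h.exists_top
  have common : ∀ H, B < H → H < T → ∀ Φ Ψ : Flag α, H ∈ Φ → H ∈ Ψ → FlagConnected rk Φ Ψ := by
    intro H hBH hHT Φ Ψ
    have := h.strictMono hBH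
    have := h.strictMono hHT
    exact flagConnected_of_mem hBle hTle (ih _ (by omega) (h.Icc hBH)) (ih _ (by omega) (h.Icc hHT))
  by_cases hm : 2 ≤ m
  · have hproper : ∀ x, rk x = 0 → B < x ∧ x < T := fun x hx =>
      ⟨(hBle x).lt_of_ne (by rintro rfl; omega), (hTle x).lt_of_ne (by rintro rfl; omega)⟩
    obtain ⟨v, hvΦ, hv⟩ := h.exists_mem_rank_eq Φ (j := 0) (by omega) (by omega)
    obtain ⟨v', hv'Ψ, hv'⟩ := h.exists_mem_rank_eq Ψ (j := 0) (by omega) (by omega)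
    have hpath := h.connected B T v v' ((hproper v hv).1.trans (hproper v hv).2) (by omega)
      (hproper v hv).1 (hproper v hv).2 (hproper v' hv').1 (hproper v' hv').2
    suffices hreach : ∀ w, ReflTransGen _ v w → ∀ Ω : Flag α, w ∈ Ω → FlagConnected rk Φ Ω from
      hreach v' hpath Ψ hv'Ψ
    intro w hw
    induction hw with
    | refl => exact fun Ω hΩ => common v (hproper v hv).1 (hproper v hv).2 Φ Ω hvΦ hΩ
    | @tail x y _ hxy ihx =>
      obtain ⟨-, -, hBy, hyT, hxy⟩ := hxy
      intro Ω hΩ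
      obtain ⟨Ω', hxΩ', hyΩ'⟩ : ∃ Ω' : Flag α, x ∈ Ω' ∧ y ∈ Ω' :=
        hxy.elim Flag.exists_mem_mem_of_le fun hyx => (Flag.exists_mem_mem_of_le hyx).imp
          fun _ => And.symm
      exact (ihx Ω' hxΩ').trans (common y hBy hyT Ω' Ω hyΩ' hΩ)
  · -- in rank at most `1`, distinct flags differ only in their vertex
    rcases eq_or_ne Φ Ψ with rfl | hne
    · exact ReflTransGen.refl
    refine ReflTransGen.single ⟨0, hne, fun x hx => ?_⟩
    have := h.neg_one_le_rank x
    have := h.rank_le x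
    rcases (show rk x = -1 ∨ rk x = m by omega) with hx | hx
    · simp [Flag.mem_of_forall_le (h.le_of_rank_eq_neg_one hx)]
    · simp [Flag.mem_of_forall_ge (h.le_of_rank_eq hx)]

lemma IsAbstractPolytope.adjacentOrbit_connected {m : ℕ} {T : Type*} [PartialOrder T]
    {rk : T → ℤ} (h : IsAbstractPolytope m T rk) (o o' : FlagOrbit T) :
    ReflTransGen (fun o o' => ∃ i : {i : ℤ // 0 ≤ i ∧ i < m}, h.adjacentOrbit i o = o') o o' := by
  induction o using Quot.ind
  induction o' using Quot.ind
  exact ReflTransGen.lift _ (fun _ _ ⟨i, hi⟩ => ⟨⟨i, h.rank_mem_of_iAdjacent hi⟩,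
    congrArg (Quot.mk _) (h.adjacentFlag_eq hi)⟩) _ _ (h.flagConnected _ _)

def IsSectionOrbit {R T : Type*} [PartialOrder R] [PartialOrder T] (rk : R → ℤ) (a b : ℤ)
    (Φ : Flag R) (o : FlagOrbit T) : Prop :=
  ∃ (F G : R) (hF : F ∈ Φ) (hG : G ∈ Φ) (e : Icc F G ≃o T),
    rk F = a ∧ rk G = b ∧ Quot.mk _ (Flag.map e (Φ.restrictIcc hF hG)) = o

namespace IsAbstractPolytope

variable {n : ℕ} {R T : Type*} [PartialOrder R] [PartialOrder T] {rk : R → ℤ} {a b : ℤ}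
  (h : IsAbstractPolytope n R rk)
include h

lemma exists_isSectionOrbit (ha : -1 ≤ a) (hab : a < b) (hb : b ≤ n)
    (hsec : ∀ F G : R, F < G → rk F = a → rk G = b → Nonempty (Set.Icc F G ≃o T))
    (Φ : Flag R) : ∃ o : FlagOrbit T, IsSectionOrbit rk a b Φ o := by
  obtain ⟨F, hF, hFa⟩ := h.exists_mem_rank_eq Φ ha (by omega)
  obtain ⟨G, hG, hGb⟩ := h.exists_mem_rank_eq Φ (by omega) hb
  obtain ⟨e⟩ := hsec F G (h.lt_of_mem_of_rank_lt hF hG (by omega)) hFa hGb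
  exact ⟨_, F, G, hF, hG, e, hFa, hGb, rfl⟩

lemma eq_of_isSectionOrbit {Φ : Flag R} {o o' : FlagOrbit T} (ho : IsSectionOrbit rk a b Φ o)
    (ho' : IsSectionOrbit rk a b Φ o') : o = o' := by
  obtain ⟨F, G, hF, hG, e, hFa, hGb, rfl⟩ := ho
  obtain ⟨F', G', hF', hG', e', hF'a, hG'b, rfl⟩ := ho'
  obtain rfl := h.eq_of_mem_of_rank_eq hF hF' (hFa.trans hF'a.symm)
  obtain rfl := h.eq_of_mem_of_rank_eq hG hG' (hGb.trans hG'b.symm)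
  exact FlagOrbit.mk_map_eq_mk_map e e' _

lemma isSectionOrbit_map (σ : R ≃o R) {Φ : Flag R} {o : FlagOrbit T}
    (ho : IsSectionOrbit rk a b Φ o) : IsSectionOrbit rk a b (Flag.map σ Φ) o := by
  obtain ⟨F, G, hF, hG, e, rfl, rfl, rfl⟩ := ho
  have hσF : σ F ∈ Flag.map σ Φ := by simpa [Flag.mem_map_iff] using hF
  have hσG : σ G ∈ Flag.map σ Φ := by simpa [Flag.mem_map_iff] using hG
  refine ⟨σ F, σ G, hσF, hσG, (σ.restrictIcc F G).symm.trans e, h.rank_orderIso h σ F,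
    h.rank_orderIso h σ G, ?_⟩
  rw [← Flag.map_restrictIcc σ (hF := hF) (hG := hG) hσF hσG, Flag.map_trans, ← Flag.symm_map,
    Equiv.symm_apply_apply]

lemma isSectionOrbit_adjacentFlag {m : ℕ} {rkT : T → ℤ} (hT : IsAbstractPolytope m T rkT)
    {i : ℤ} (hi : 0 ≤ i ∧ i < b - a - 1) {Φ : Flag R} {o : FlagOrbit T}
    (ho : IsSectionOrbit rk a b Φ o) :
    IsSectionOrbit rk a b (adjacentFlag rk (i + a + 1) Φ) (hT.adjacentOrbit i o) := by
  obtain ⟨F, G, hF, hG, e, rfl, rfl, rfl⟩ := ho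
  have hadj := h.iAdjacent_adjacentFlag (i := i + rk F + 1)
    ⟨by linarith [h.neg_one_le_rank F], by linarith [h.rank_le G]⟩ Φ
  have hFΨ := (hadj.2 F (by omega)).1 hF
  have hGΨ := (hadj.2 G (by omega)).1 hG
  refine ⟨F, G, hFΨ, hGΨ, e, rfl, rfl, congrArg (Quot.mk _) (hT.adjacentFlag_eq ?_).symm⟩
  have := (h.iAdjacent_restrictIcc hadj hF hG hFΨ hGΨ (by omega)).map e
    ((h.Icc (h.lt_of_mem_of_rank_lt hF hG (by omega))).rank_orderIso hT e)
  rwa [show i + rk F + 1 - rk F - 1 = i by ring] at this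

theorem card_flagOrbit_dvd_of_orderIso_Icc {m : ℕ} {rkT : T → ℤ}
    (hT : IsAbstractPolytope m T rkT) (ha : -1 ≤ a) (hb : b ≤ n) (hm : (m : ℤ) = b - a - 1)
    (hsec : ∀ F G : R, F < G → rk F = a → rk G = b → Nonempty (Set.Icc F G ≃o T)) :
    Nat.card (FlagOrbit T) ∣ Nat.card (FlagOrbit R) := by
  choose g hg using h.exists_isSectionOrbit ha (by omega) hb hsec
  let orbitMap : FlagOrbit R → FlagOrbit T := Quot.lift g fun Φ Ψ hΦΨ => by
    obtain ⟨σ, rfl⟩ := exists_eq_map_of_flagOrbitRel hΦΨ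
    exact h.eq_of_isSectionOrbit (h.isSectionOrbit_map σ (hg Φ)) (hg _)
  obtain ⟨B, -, -⟩ := hT.exists_bot
  obtain ⟨Φ₀, -⟩ := Flag.exists_mem_mem_of_le (le_refl B)
  refine Dvd.intro _ (Nat.card_eq_card_mul_card_fiber_of_semiconj orbitMap
    (fun i : {i : ℤ // 0 ≤ i ∧ i < m} => h.adjacentOrbit (i + a + 1)) (fun i => hT.adjacentOrbit i)
    (fun _ => h.adjacentOrbit_involutive _) (fun _ => hT.adjacentOrbit_involutive _) ?_
    hT.adjacentOrbit_connected (Quot.mk _ Φ₀)).symm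
  rintro ⟨i, hi⟩ ⟨Φ⟩
  exact h.eq_of_isSectionOrbit (hg _) (h.isSectionOrbit_adjacentFlag hT (i := i) (by omega) (hg Φ))

end IsAbstractPolytope

theorem lcm_dvd_orbit_count_of_amalgamation_general (n : ℕ) (hn : 2 ≤ n)
    {R : Type*} [PartialOrder R] (rkR : R → ℤ) (hR : IsAbstractPolytope n R rkR)
    {P : Type*} [PartialOrder P] (rkP : P → ℤ) (hP : IsAbstractPolytope (n - 1) P rkP)
    {Q : Type*} [PartialOrder Q] (rkQ : Q → ℤ) (hQ : IsAbstractPolytope (n - 1) Q rkQ)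
    (k₁ k₂ k₃ : ℕ)
    (hk₁ : Nat.card (Quot (flagOrbitRel P)) = k₁)
    (hk₂ : Nat.card (Quot (flagOrbitRel Q)) = k₂)
    (hk₃ : Nat.card (Quot (flagOrbitRel R)) = k₃)
    (hfacets : ∀ F : R, rkR F = (n : ℤ) - 1 → Nonempty ({H : R // H ≤ F} ≃o P))
    (hvertexfigs : ∀ v : R, rkR v = 0 → Nonempty ({H : R // v ≤ H} ≃o Q)) :
    Nat.lcm k₁ k₂ ∣ k₃ := by
  subst hk₁ hk₂ hk₃
  have hfacet : Nat.card (FlagOrbit P) ∣ Nat.card (FlagOrbit R) :=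
    hR.card_flagOrbit_dvd_of_orderIso_Icc hP (a := -1) (b := n - 1) le_rfl (by omega) (by omega)
      fun F G _ hF hG => ⟨(OrderIso.setCongr _ _ (hR.Icc_eq_Iic hF G)).trans (hfacets G hG).some⟩
  have hvertex : Nat.card (FlagOrbit Q) ∣ Nat.card (FlagOrbit R) :=
    hR.card_flagOrbit_dvd_of_orderIso_Icc hQ (a := 0) (b := n) (by norm_num) le_rfl (by omega)
      fun F G _ hF hG =>
        ⟨(OrderIso.setCongr _ _ (hR.Icc_eq_Ici hG F)).trans (hvertexfigs F hF).some⟩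
  exact Nat.lcm_dvd hfacet hvertex

/-- Let `R` be an abstract polytope of rank `n ≥ 2` with exactly `k₃` flag orbits (`k₃`
finite).  Suppose every facet-section of `R` is isomorphic to a fixed rank-`(n-1)` polytope
`P` having exactly `k₁` flag orbits, and every vertex-figure of `R` is isomorphic to a fixed
rank-`(n-1)` polytope `Q` having exactly `k₂` flag orbits (`k₁`, `k₂` finite).  Then
`lcm(k₁, k₂)` divides `k₃`. -/
theorem lcm_dvd_orbit_count_of_amalgamation (n : ℕ) (hn : 2 ≤ n)
    {R : Type*} [PartialOrder R] (rkR : R → ℤ) (hR : IsAbstractPolytope n R rkR)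
    {P : Type*} [PartialOrder P] (rkP : P → ℤ) (hP : IsAbstractPolytope (n - 1) P rkP)
    {Q : Type*} [PartialOrder Q] (rkQ : Q → ℤ) (hQ : IsAbstractPolytope (n - 1) Q rkQ)
    (k₁ k₂ k₃ : ℕ)
    (hfinP : Finite (Quot (flagOrbitRel P))) (hk₁ : Nat.card (Quot (flagOrbitRel P)) = k₁)
    (hfinQ : Finite (Quot (flagOrbitRel Q))) (hk₂ : Nat.card (Quot (flagOrbitRel Q)) = k₂)
    (hfinR : Finite (Quot (flagOrbitRel R))) (hk₃ : Nat.card (Quot (flagOrbitRel R)) = k₃)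
    (hfacets : ∀ F : R, rkR F = (n : ℤ) - 1 → Nonempty ({H : R // H ≤ F} ≃o P))
    (hvertexfigs : ∀ v : R, rkR v = 0 → Nonempty ({H : R // v ≤ H} ≃o Q)) :
    Nat.lcm k₁ k₂ ∣ k₃ :=
  lcm_dvd_orbit_count_of_amalgamation_general n hn rkR hR rkP hP rkQ hQ k₁ k₂ k₃ hk₁ hk₂ hk₃ hfacets
    hvertexfigs
end
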